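/- (Standard translation) For every InqML formula φ over P there is an FO formula φ*(x) with one free state-sort variable x such that for every inquisitive modal model M = ⟨W,Σ,V⟩, for each of the three relational encodings 𝔐 ∈ { 𝔐^rel(M), 𝔐^lf(M), 𝔐^full(M) }, and for every state s in the second sort of 𝔐: M,s ⊨ φ if and only if 𝔐 ⊨ φ*(s). -/

import Mathlib

/-- Formulas of inquisitive modal logic InqML over atomic propositions `P`. -/
inductive InqForm (P : Type) : Type
  | atom : P → InqForm P
  | bot : InqForm P
  | and : InqForm P → InqForm P → InqForm P
  | impl : InqForm P → InqForm P → InqForm P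
  | idisj : InqForm P → InqForm P → InqForm P
  | box : InqForm P → InqForm P
  | boxplus : InqForm P → InqForm P

/-- An inquisitive modal model `M = ⟨W, Σ, V⟩`. -/
structure InqModel (P : Type) where
  W : Type
  Sig : W → Set (Set W)
  Sig_nonempty : ∀ w, (Sig w).Nonempty
  Sig_downward : ∀ w, ∀ s ∈ Sig w, ∀ t ⊆ s, t ∈ Sig w
  V : P → Set W

/-- `σ(w) = ⋃ Σ(w)`. -/
def InqModel.sigma {P : Type} (M : InqModel P) (w : M.W) : Set M.W :=
  ⋃₀ M.Sig w

/-- Support of a formula at an information state `s ⊆ W`. -/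
def support {P : Type} (M : InqModel P) : InqForm P → Set M.W → Prop
  | .atom p, s => s ⊆ M.V p
  | .bot, s => s = ∅
  | .and φ ψ, s => support M φ s ∧ support M ψ s
  | .impl φ ψ, s => ∀ t ⊆ s, support M φ t → support M ψ t
  | .idisj φ ψ, s => support M φ s ∨ support M ψ s
  | .box φ, s => ∀ w ∈ s, support M φ (M.sigma w)
  | .boxplus φ, s => ∀ w ∈ s, ∀ t ∈ M.Sig w, support M φ t

/-- Truth at a world: `M,w ⊨ φ` iff `M,{w} ⊨ φ`. -/
def truth {P : Type} (M : InqModel P) (w : M.W) (φ : InqForm P) : Prop :=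
  support M φ {w}

/-- Two-sorted first-order formulas over the signature with a world sort, a
state sort, binary relations `E` and `∈` between worlds and states, equality on
both sorts, and a unary predicate for each atom in `P`.  Variables are de
Bruijn indices; `FO P n m` has world-sort variables `Fin n` and state-sort
variables `Fin m`.  (Other connectives and `∃` are definable from `⊥`, `→`, `∀`.) -/
inductive FO (P : Type) : ℕ → ℕ → Type
  | eqW {n m : ℕ} : Fin n → Fin n → FO P n m
  | eqS {n m : ℕ} : Fin m → Fin m → FO P n m
  | rel {n m : ℕ} : Fin n → Fin m → FO P n m
  | mem {n m : ℕ} : Fin n → Fin m → FO P n m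
  | atom {n m : ℕ} : P → Fin n → FO P n m
  | fal {n m : ℕ} : FO P n m
  | imp {n m : ℕ} : FO P n m → FO P n m → FO P n m
  | allW {n m : ℕ} : FO P (n + 1) m → FO P n m
  | allS {n m : ℕ} : FO P n (m + 1) → FO P n m

/-- Satisfaction of a two-sorted first-order formula in the two-sorted
structure with world sort `W`, state sort `↥S`, relations `E` and membership,
and atom predicates given by `V`. -/
def FOsat {P W : Type} (S : Set (Set W)) (E : W → Set (Set W)) (V : P → Set W) :
    {n m : ℕ} → FO P n m → (Fin n → W) → (Fin m → ↥S) → Prop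
  | _, _, .eqW i j, a, _ => a i = a j
  | _, _, .eqS i j, _, b => b i = b j
  | _, _, .rel i j, a, b => (b j : Set W) ∈ E (a i)
  | _, _, .mem i j, a, b => a i ∈ (b j : Set W)
  | _, _, .atom p i, a, _ => a i ∈ V p
  | _, _, .fal, _, _ => False
  | _, _, .imp φ ψ, a, b => FOsat S E V φ a b → FOsat S E V ψ a b
  | _, _, .allW φ, a, b => ∀ w : W, FOsat S E V φ (Fin.cons w a) b
  | _, _, .allS φ, a, b => ∀ s : ↥S, FOsat S E V φ a (Fin.cons s b)

/-- Second sort of the minimal relational encoding `𝔐^rel(M)`: the image of `Σ`. -/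
def Srel {P : Type} (M : InqModel P) : Set (Set M.W) :=
  {s | ∃ w : M.W, s ∈ M.Sig w}

/-- Second sort of the locally full encoding `𝔐^lf(M)`: `{ s ⊆ σ(w) : w ∈ W }`. -/
def Slf {P : Type} (M : InqModel P) : Set (Set M.W) :=
  {s | ∃ w : M.W, s ⊆ M.sigma w}

/-- Second sort of the full encoding `𝔐^full(M)`: the full powerset `℘(W)`. -/
def Sfull {P : Type} (M : InqModel P) : Set (Set M.W) :=
  Set.univ

/-!
The translation is taken relative to an FO formula `D` defining the state at hand, not to
a state variable: `□` needs `φ` at `σ(w)`, which is FO-definable but need not belong to the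
second sort of `𝔐^rel(M)`, while `⊞` only needs the states in `Σ(w)`, which belong to every
encoding. The one clause quantifying over arbitrary substates is implication. Support is
persistent and every state refuting `ψ` contains a refuting state of at most `ψ.witnessBound`
worlds, so `φ → ψ` only has to be checked on the sets `{x₁, …, xₖ} ⊆ D` with
`k = ψ.witnessBound`, and these can be quantified in first-order logic.
-/

theorem Fin.range_append {α : Type*} {k l : ℕ} (u : Fin k → α) (v : Fin l → α) :
    Set.range (Fin.append u v) = Set.range u ∪ Set.range v := by
  ext x
  constructor
  · rintro ⟨i, rfl⟩
    induction i using Fin.addCases with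
    | left i => exact Or.inl ⟨i, (Fin.append_left u v i).symm⟩
    | right i => exact Or.inr ⟨i, (Fin.append_right u v i).symm⟩
  · rintro (⟨i, rfl⟩ | ⟨i, rfl⟩)
    exacts [⟨_, Fin.append_left u v i⟩, ⟨_, Fin.append_right u v i⟩]

theorem Fin.cons_cons_comp_succAbove_one {α : Type*} {n : ℕ} (y x : α) (a : Fin n → α) :
    Fin.cons y (Fin.cons x a) ∘ Fin.succAbove 1 = Fin.cons y a := by
  funext i
  induction i using Fin.cases <;> simp

namespace InqForm

variable {P : Type}

def witnessBound : InqForm P → ℕ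
  | .atom _ | .bot | .box _ | .boxplus _ => 1
  | .and φ ψ | .idisj φ ψ => φ.witnessBound + ψ.witnessBound
  | .impl _ ψ => ψ.witnessBound

end InqForm

section Support

variable {P : Type} {M : InqModel P}

theorem support_empty (φ : InqForm P) : support M φ ∅ := by
  induction φ with
  | atom p => exact Set.empty_subset _
  | bot => rfl
  | and φ ψ ihφ ihψ => exact ⟨ihφ, ihψ⟩
  | impl φ ψ _ ihψ => exact fun t ht _ => Set.subset_empty_iff.mp ht ▸ ihψ
  | idisj φ ψ ihφ _ => exact Or.inl ihφ
  | box φ _ => exact fun w hw => absurd hw (Set.notMem_empty w)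
  | boxplus φ _ => exact fun w hw => absurd hw (Set.notMem_empty w)

theorem support_anti (φ : InqForm P) {s t : Set M.W} (hs : support M φ s) (hts : t ⊆ s) :
    support M φ t := by
  induction φ generalizing s t with
  | atom p => exact hts.trans hs
  | bot => exact Set.subset_empty_iff.mp (hs ▸ hts)
  | and φ ψ ihφ ihψ => exact ⟨ihφ hs.1 hts, ihψ hs.2 hts⟩
  | impl φ ψ _ _ => exact fun u hut hu => hs u (hut.trans hts) hu
  | idisj φ ψ ihφ ihψ => exact hs.imp (ihφ · hts) (ihψ · hts)
  | box φ _ => exact fun w hw => hs w (hts hw)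
  | boxplus φ _ => exact fun w hw => hs w (hts hw)

theorem exists_tuple_not_support (φ : InqForm P) {t : Set M.W} (h : ¬ support M φ t) :
    ∃ v : Fin φ.witnessBound → M.W, Set.range v ⊆ t ∧ ¬ support M φ (Set.range v) := by
  induction φ generalizing t with
  | atom p =>
    rw [InqForm.witnessBound]
    obtain ⟨w, hwt, hw⟩ := Set.not_subset.mp h
    exact ⟨fun _ => w, Set.range_subset_iff.mpr fun _ => hwt, fun hs => hw (hs ⟨0, rfl⟩)⟩
  | bot =>
    rw [InqForm.witnessBound]
    obtain ⟨w, hwt⟩ := Set.nonempty_iff_ne_empty.mpr h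
    exact ⟨fun _ => w, Set.range_subset_iff.mpr fun _ => hwt, Set.range_nonempty _ |>.ne_empty⟩
  | and φ ψ ihφ ihψ =>
    rw [InqForm.witnessBound]
    obtain ⟨w, hwt⟩ : t.Nonempty :=
      Set.nonempty_iff_ne_empty.mpr fun ht => h (ht ▸ support_empty _)
    have hw {k : ℕ} : Set.range (fun _ : Fin k => w) ⊆ t :=
      Set.range_subset_iff.mpr fun _ => hwt
    rcases not_and_or.mp h with hφ | hψ
    · obtain ⟨v, hvt, hv⟩ := ihφ hφ
      refine ⟨Fin.append v fun _ => w, ?_, fun hs => hv (support_anti φ hs.1 ?_)⟩ <;>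
        rw [Fin.range_append]
      exacts [Set.union_subset hvt hw, Set.subset_union_left]
    · obtain ⟨v, hvt, hv⟩ := ihψ hψ
      refine ⟨Fin.append (fun _ => w) v, ?_, fun hs => hv (support_anti ψ hs.2 ?_)⟩ <;>
        rw [Fin.range_append]
      exacts [Set.union_subset hw hvt, Set.subset_union_right]
  | impl φ ψ _ ihψ =>
    obtain ⟨u, hut, hφ, hψ⟩ : ∃ u ⊆ t, support M φ u ∧ ¬ support M ψ u := by
      simpa [support] using h
    obtain ⟨v, hvu, hv⟩ := ihψ hψ
    exact ⟨v, hvu.trans hut, fun hs => hv (hs _ subset_rfl (support_anti φ hφ hvu))⟩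
  | idisj φ ψ ihφ ihψ =>
    rw [InqForm.witnessBound]
    obtain ⟨v, hvt, hv⟩ := ihφ (not_or.mp h).1
    obtain ⟨u, hut, hu⟩ := ihψ (not_or.mp h).2
    refine ⟨Fin.append v u, ?_, ?_⟩ <;> rw [Fin.range_append]
    · exact Set.union_subset hvt hut
    · exact fun hs => hs.elim (hv <| support_anti φ · Set.subset_union_left)
        (hu <| support_anti ψ · Set.subset_union_right)
  | box φ _ =>
    rw [InqForm.witnessBound]
    obtain ⟨w, hwt, hw⟩ : ∃ w ∈ t, ¬ support M φ (M.sigma w) := by simpa [support] using h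
    exact ⟨fun _ => w, Set.range_subset_iff.mpr fun _ => hwt, fun hs => hw (hs w ⟨0, rfl⟩)⟩
  | boxplus φ _ =>
    rw [InqForm.witnessBound]
    obtain ⟨w, hwt, hw⟩ : ∃ w ∈ t, ¬ ∀ u ∈ M.Sig w, support M φ u := by
      simpa [support] using h
    exact ⟨fun _ => w, Set.range_subset_iff.mpr fun _ => hwt, fun hs => hw (hs w ⟨0, rfl⟩)⟩

theorem support_impl_iff_forall_tuple (φ ψ : InqForm P) (t : Set M.W) :
    support M (.impl φ ψ) t ↔ ∀ v : Fin ψ.witnessBound → M.W, Set.range v ⊆ t →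
      support M φ (Set.range v) → support M ψ (Set.range v) := by
  refine ⟨fun h v hv => h _ hv, fun h u hut hφ => by_contra fun hψ => ?_⟩
  obtain ⟨v, hvu, hψv⟩ := exists_tuple_not_support ψ hψ
  exact hψv (h v (hvu.trans hut) (support_anti φ hφ hvu))

end Support

namespace FO

variable {P W : Type}

def neg {n m : ℕ} (φ : FO P n m) : FO P n m := .imp φ .fal

def or {n m : ℕ} (φ ψ : FO P n m) : FO P n m := .imp φ.neg ψ

def and {n m : ℕ} (φ ψ : FO P n m) : FO P n m := (φ.imp ψ.neg).neg

def exS {n m : ℕ} (φ : FO P n (m + 1)) : FO P n m := (FO.allS φ.neg).neg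

def memSigma {n m : ℕ} (x i : Fin n) : FO P n m := exS ((FO.rel i 0).and (.mem x 0))

def renameW : {n n' m : ℕ} → (Fin n → Fin n') → FO P n m → FO P n' m
  | _, _, _, f, .eqW i j => .eqW (f i) (f j)
  | _, _, _, _, .eqS i j => .eqS i j
  | _, _, _, f, .rel i j => .rel (f i) j
  | _, _, _, f, .mem i j => .mem (f i) j
  | _, _, _, f, .atom p i => .atom p (f i)
  | _, _, _, _, .fal => .fal
  | _, _, _, f, .imp φ ψ => .imp (renameW f φ) (renameW f ψ)
  | _, _, _, f, .allW φ => .allW (renameW (Fin.cons 0 (Fin.succ ∘ f)) φ)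
  | _, _, _, f, .allS φ => .allS (renameW f φ)

def definedSet (S : Set (Set W)) (R : W → Set (Set W)) (V : P → Set W) {n m : ℕ}
    (D : FO P (n + 1) m) (a : Fin n → W) (b : Fin m → ↥S) : Set W :=
  {w | FOsat S R V D (Fin.cons w a) b}

def forallTupleImp (F G : ∀ {n m : ℕ}, FO P (n + 1) m → FO P n m) :
    ℕ → {n m : ℕ} → FO P (n + 1) m → FO P (n + 1) m → FO P n m
  | 0, _, _, _, E => .imp (F E) (G E)
  | k + 1, _, _, D, E =>
    -- the new world is variable `1` of `D` and `E`, their element variable stays `0`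
    .allW (.imp D (forallTupleImp F G k (D.renameW (Fin.succAbove 1))
      ((FO.eqW 0 1).or (E.renameW (Fin.succAbove 1)))))

variable {S : Set (Set W)} {R : W → Set (Set W)} {V : P → Set W}

section

variable {n m : ℕ} {a : Fin n → W} {b : Fin m → ↥S}

theorem sat_or {φ ψ : FO P n m} :
    FOsat S R V (φ.or ψ) a b ↔ FOsat S R V φ a b ∨ FOsat S R V ψ a b :=
  or_iff_not_imp_left.symm

theorem sat_and {φ ψ : FO P n m} :
    FOsat S R V (φ.and ψ) a b ↔ FOsat S R V φ a b ∧ FOsat S R V ψ a b :=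
  Classical.not_imp.trans (and_congr_right' not_not)

theorem sat_exS {φ : FO P n (m + 1)} :
    FOsat S R V (exS φ) a b ↔ ∃ s : ↥S, FOsat S R V φ a (Fin.cons s b) :=
  not_forall_not

theorem sat_memSigma (hR : ∀ w, R w ⊆ S) (x i : Fin n) :
    FOsat S R V (memSigma x i) a b ↔ a x ∈ ⋃₀ R (a i) := by
  simp only [memSigma, sat_exS, sat_and, Set.mem_sUnion]
  exact ⟨fun ⟨s, hs, hx⟩ => ⟨s, hs, hx⟩,
    fun ⟨s, hs, hx⟩ => ⟨⟨s, hR _ hs⟩, hs, hx⟩⟩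

end

theorem sat_renameW {n n' m : ℕ} (f : Fin n → Fin n') (φ : FO P n m) (a : Fin n' → W)
    (b : Fin m → ↥S) : FOsat S R V (φ.renameW f) a b ↔ FOsat S R V φ (a ∘ f) b := by
  induction φ generalizing n' with
  | imp φ ψ ihφ ihψ => exact imp_congr (ihφ f a b) (ihψ f a b)
  | allW φ ih =>
    refine forall_congr' fun w => ?_
    rw [ih, Fin.comp_cons, Fin.cons_zero, ← Function.comp_assoc, Fin.cons_comp_succ]
  | allS φ ih => exact forall_congr' fun s => ih f a _
  | _ => rfl

theorem definedSet_fal {n m : ℕ} (a : Fin n → W) (b : Fin m → ↥S) :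
    definedSet S R V (FO.fal : FO P (n + 1) m) a b = ∅ :=
  Set.eq_empty_of_forall_notMem fun _ => id

theorem definedSet_renameW_succAbove_one {n m : ℕ} (D : FO P (n + 1) m) (x : W)
    (a : Fin n → W) (b : Fin m → ↥S) :
    definedSet S R V (D.renameW (Fin.succAbove 1)) (Fin.cons x a) b =
      definedSet S R V D a b := by
  ext y
  simp only [definedSet, sat_renameW, Fin.cons_cons_comp_succAbove_one]

theorem sat_forallTupleImp {p q : Set W → Prop}
    {F G : ∀ {n m : ℕ}, FO P (n + 1) m → FO P n m}
    (hF : ∀ {n m : ℕ} (D : FO P (n + 1) m) a b,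
      FOsat S R V (F D) a b ↔ p (definedSet S R V D a b))
    (hG : ∀ {n m : ℕ} (D : FO P (n + 1) m) a b,
      FOsat S R V (G D) a b ↔ q (definedSet S R V D a b))
    (k : ℕ) {n m : ℕ} (D E : FO P (n + 1) m) (a : Fin n → W) (b : Fin m → ↥S) :
    FOsat S R V (forallTupleImp F G k D E) a b ↔
      ∀ v : Fin k → W, Set.range v ⊆ definedSet S R V D a b →
        p (definedSet S R V E a b ∪ Set.range v) →
          q (definedSet S R V E a b ∪ Set.range v) := by
  induction k generalizing n D E a with
  | zero => simp [forallTupleImp, FOsat, hF, hG]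
  | succ k ih =>
    have hE (x : W) :
        definedSet S R V ((FO.eqW 0 1).or (E.renameW (Fin.succAbove 1))) (Fin.cons x a) b =
          insert x (definedSet S R V E a b) := by
      ext y
      simp [definedSet, sat_or, FOsat, sat_renameW, Fin.cons_cons_comp_succAbove_one]
    simp only [forallTupleImp, FOsat, ih, definedSet_renameW_succAbove_one, hE,
      Fin.forall_fin_succ_pi, Fin.range_cons, Set.insert_subset_iff, Set.insert_union,
      Set.union_insert, and_imp]
    exact forall_congr' fun _ => forall_comm

end FO

namespace InqForm

variable {P : Type}

def toFO : InqForm P → {n m : ℕ} → FO P (n + 1) m → FO P n m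
  | .atom p, _, _, D => .allW (.imp D (.atom p 0))
  | .bot, _, _, D => .allW (.imp D .fal)
  | .and φ ψ, _, _, D => (φ.toFO D).and (ψ.toFO D)
  | .idisj φ ψ, _, _, D => (φ.toFO D).or (ψ.toFO D)
  | .impl φ ψ, _, _, D => FO.forallTupleImp φ.toFO ψ.toFO ψ.witnessBound D .fal
  | .box φ, _, _, D => .allW (.imp D (φ.toFO (FO.memSigma 0 1)))
  | .boxplus φ, _, _, D => .allW (.imp D (.allS (.imp (.rel 0 0) (φ.toFO (.mem 0 0)))))

theorem sat_toFO {M : InqModel P} {S : Set (Set M.W)} (hS : ∀ w, M.Sig w ⊆ S)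
    (φ : InqForm P) {n m : ℕ} (D : FO P (n + 1) m) (a : Fin n → M.W) (b : Fin m → ↥S) :
    FOsat S M.Sig M.V (φ.toFO D) a b ↔ support M φ (FO.definedSet S M.Sig M.V D a b) := by
  induction φ generalizing n m with
  | atom p => rfl
  | bot => exact Set.eq_empty_iff_forall_notMem.symm
  | and φ ψ ihφ ihψ => exact FO.sat_and.trans (and_congr (ihφ D a b) (ihψ D a b))
  | idisj φ ψ ihφ ihψ => exact FO.sat_or.trans (or_congr (ihφ D a b) (ihψ D a b))
  | impl φ ψ ihφ ihψ =>
    rw [toFO, FO.sat_forallTupleImp ihφ ihψ, support_impl_iff_forall_tuple, FO.definedSet_fal]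
    simp only [Set.empty_union]
  | box φ ih =>
    have hσ (w : M.W) :
        FO.definedSet S M.Sig M.V (FO.memSigma 0 1) (Fin.cons w a) b = M.sigma w :=
      Set.ext fun _ => FO.sat_memSigma hS 0 1
    exact forall_congr' fun w => imp_congr_right fun _ => by rw [ih, hσ]
  | boxplus φ ih =>
    refine forall_congr' fun w => imp_congr_right fun _ => ?_
    exact ⟨fun h t ht => (ih _ _ _).mp (h ⟨t, hS w ht⟩ ht),
      fun h s hs => (ih _ _ _).mpr (h s hs)⟩

end InqForm

namespace InqModel

variable {P : Type} (M : InqModel P)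

theorem Sig_subset_Srel (w : M.W) : M.Sig w ⊆ Srel M :=
  fun _ ht => ⟨w, ht⟩

theorem Sig_subset_Slf (w : M.W) : M.Sig w ⊆ Slf M :=
  fun _ ht => ⟨w, Set.subset_sUnion_of_mem ht⟩

end InqModel

/-- **Standard translation**: for each InqML formula `φ` there is a two-sorted
FO formula `φ*(x)` with one free state-sort variable such that, over each of the
three relational encodings `𝔐^rel(M)`, `𝔐^lf(M)`, `𝔐^full(M)` of any
inquisitive modal model `M` (which share `E` given by `wEs ⇔ s ∈ Σ(w)`,
membership `∈`, and `P_i = V(p_i)`, and differ only in the second sort `S`):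
`M,s ⊨ φ` iff `𝔐 ⊨ φ*(s)` for every state `s` of the second sort. -/
theorem standard_translation {P : Type} (φ : InqForm P) :
    ∃ φs : FO P 0 1, ∀ (M : InqModel P) (S : Set (Set M.W)),
      (S = Srel M ∨ S = Slf M ∨ S = Sfull M) →
      ∀ s : ↥S, (support M φ (s : Set M.W) ↔
        FOsat S M.Sig M.V φs (fun i => i.elim0) (fun _ => s)) := by
  refine ⟨φ.toFO (.mem 0 0), fun M S hS s => ?_⟩
  have hSig : ∀ w, M.Sig w ⊆ S := by
    rcases hS with rfl | rfl | rfl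
    exacts [M.Sig_subset_Srel, M.Sig_subset_Slf, fun _ => Set.subset_univ _]
  exact (φ.sat_toFO hSig (m := 1) (.mem 0 0) (fun i => i.elim0) fun _ => s).symm
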